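/- arXiv:2406.05139 — 4 statements merged into one kernel-verified Lean document; each statement's English description precedes it below -/
import Mathlib

section
/- Let Ω(u,v) = ((cos u − u)/2, (cos u + u)/2, sin u/√2, v/(2√2)) be a surface in E⁴. Then Ω satisfies the Betchov–Da Rios equation Ω_v = Ω_u × Ω_uu × Ω_uuu, where × denotes the ternary cross product in E⁴. -/
/-- The ternary cross product in `E⁴`, given by the formal 4×4 determinant with the
standard basis vectors in the first row and `a`, `b`, `c` in the remaining rows. -/
noncomputable def cross (a b c : Fin 4 → ℝ) : Fin 4 → ℝ :=
  ![ a 1 * (b 2 * c 3 - b 3 * c 2) - a 2 * (b 1 * c 3 - b 3 * c 1) + a 3 * (b 1 * c 2 - b 2 * c 1),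
    -(a 0 * (b 2 * c 3 - b 3 * c 2) - a 2 * (b 0 * c 3 - b 3 * c 0) + a 3 * (b 0 * c 2 - b 2 * c 0)),
     a 0 * (b 1 * c 3 - b 3 * c 1) - a 1 * (b 0 * c 3 - b 3 * c 0) + a 3 * (b 0 * c 1 - b 1 * c 0),
    -(a 0 * (b 1 * c 2 - b 2 * c 1) - a 1 * (b 0 * c 2 - b 2 * c 0) + a 2 * (b 0 * c 1 - b 1 * c 0)) ]

/-- The example soliton surface Ω(u,v). -/
noncomputable def Ω : ℝ → ℝ → (Fin 4 → ℝ) := fun u v =>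
  ![(Real.cos u - u) / 2, (Real.cos u + u) / 2, Real.sin u / Real.sqrt 2,
    v / (2 * Real.sqrt 2)]

lemma hd1 (v u : ℝ) : HasDerivAt (fun u' => Ω u' v)
    ![(-Real.sin u - 1)/2, (-Real.sin u + 1)/2, Real.cos u / Real.sqrt 2, 0] u := by
  rw [hasDerivAt_pi]
  intro i
  fin_cases i <;> simp only [Ω, Matrix.cons_val_zero, Matrix.cons_val_one, Matrix.head_cons,
    Matrix.cons_val_two, Matrix.tail_cons, Matrix.cons_val_three, Fin.isValue]
  · exact ((Real.hasDerivAt_cos u).sub (hasDerivAt_id u)).div_const 2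
  · exact ((Real.hasDerivAt_cos u).add (hasDerivAt_id u)).div_const 2
  · exact (Real.hasDerivAt_sin u).div_const _
  · exact hasDerivAt_const _ _

lemma hd2 (u : ℝ) : HasDerivAt
    (fun u' => (![(-Real.sin u' - 1)/2, (-Real.sin u' + 1)/2, Real.cos u' / Real.sqrt 2, 0] : Fin 4 → ℝ))
    ![(-Real.cos u)/2, (-Real.cos u)/2, -Real.sin u / Real.sqrt 2, 0] u := by
  rw [hasDerivAt_pi]
  intro i
  fin_cases i <;> simp only [Matrix.cons_val_zero, Matrix.cons_val_one, Matrix.head_cons,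
    Matrix.cons_val_two, Matrix.tail_cons, Matrix.cons_val_three, Fin.isValue]
  · simpa using (((Real.hasDerivAt_sin u).neg).sub (hasDerivAt_const u 1)).div_const 2
  · simpa using (((Real.hasDerivAt_sin u).neg).add (hasDerivAt_const u 1)).div_const 2
  · exact (Real.hasDerivAt_cos u).div_const _
  · exact hasDerivAt_const _ _

lemma hd3 (u : ℝ) : HasDerivAt
    (fun u' => (![(-Real.cos u')/2, (-Real.cos u')/2, -Real.sin u' / Real.sqrt 2, 0] : Fin 4 → ℝ))
    ![Real.sin u/2, Real.sin u/2, -Real.cos u / Real.sqrt 2, 0] u := by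
  rw [hasDerivAt_pi]
  intro i
  fin_cases i <;> simp only [Matrix.cons_val_zero, Matrix.cons_val_one, Matrix.head_cons,
    Matrix.cons_val_two, Matrix.tail_cons, Matrix.cons_val_three, Fin.isValue]
  · have := ((Real.hasDerivAt_cos u).neg).div_const 2
    simpa using this
  · have := ((Real.hasDerivAt_cos u).neg).div_const 2
    simpa using this
  · exact ((Real.hasDerivAt_sin u).neg).div_const _
  · exact hasDerivAt_const _ _

lemma hdv (u v : ℝ) : HasDerivAt (fun v' => Ω u v')
    ![0, 0, 0, 1 / (2 * Real.sqrt 2)] v := by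
  rw [hasDerivAt_pi]
  intro i
  fin_cases i <;> simp only [Ω, Matrix.cons_val_zero, Matrix.cons_val_one, Matrix.head_cons,
    Matrix.cons_val_two, Matrix.tail_cons, Matrix.cons_val_three, Fin.isValue]
  · exact hasDerivAt_const _ _
  · exact hasDerivAt_const _ _
  · exact hasDerivAt_const _ _
  · simpa using (hasDerivAt_id v).div_const (2 * Real.sqrt 2)

/-- Ω satisfies the Betchov–Da Rios equation Ω_v = Ω_u × Ω_uu × Ω_uuu. -/
theorem betchov_da_rios_example : ∀ u v : ℝ,
    deriv (fun v' => Ω u v') v =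
      cross (deriv (fun u' => Ω u' v) u)
        (deriv (fun u' => deriv (fun u'' => Ω u'' v) u') u)
        (deriv (fun u' => deriv (fun u'' => deriv (fun u''' => Ω u''' v) u'') u') u) := by
  intro u v
  have e1 : (fun u' => deriv (fun u'' => Ω u'' v) u') =
      fun u' => (![(-Real.sin u' - 1)/2, (-Real.sin u' + 1)/2, Real.cos u' / Real.sqrt 2, 0] : Fin 4 → ℝ) :=
    funext fun u' => (hd1 v u').deriv
  have e2 : (fun u' => deriv (fun u'' => deriv (fun u''' => Ω u''' v) u'') u') =
      fun u' => (![(-Real.cos u')/2, (-Real.cos u')/2, -Real.sin u' / Real.sqrt 2, 0] : Fin 4 → ℝ) := by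
    funext u'
    rw [e1]
    exact (hd2 u').deriv
  rw [(hdv u v).deriv, (hd1 v u).deriv, e2, (hd3 u).deriv, e1, (hd2 u).deriv]
  have h2 : Real.sqrt 2 ≠ 0 := by positivity
  have hsq : Real.sqrt 2 * Real.sqrt 2 = 2 := Real.mul_self_sqrt (by norm_num)
  funext i
  fin_cases i <;>
    simp only [cross, Matrix.cons_val_zero, Matrix.cons_val_one, Matrix.head_cons,
      Matrix.cons_val_two, Matrix.tail_cons, Matrix.cons_val_three, Fin.isValue,
      Fin.zero_eta, Fin.mk_one, Fin.reduceFinMk] <;>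
    field_simp
  ring_nf
  linear_combination
  · ring
  · linear_combination (-2) * Real.sin_sq_add_cos_sq u
end

section
/- Suppose Ω(u,v) is a smooth surface in E⁴ with Ω_u = T unit speed and extended Darboux frame equations T_u = κ_n N, E_u = κ_g² D + τ_g¹ N, D_u = −κ_g² E, N_u = −κ_n T − τ_g¹ E. If Ω satisfies the Betchov–Da Rios equation Ω_v = Ω_u × Ω_uu × Ω_uuu, then Ω_v = κ_n² τ_g¹ D, where × is the ternary cross product with D = N × T × E. -/
/-- If Ω satisfies the Betchov–Da Rios equation Ω_v = Ω_u × Ω_uu × Ω_uuu, with Ω_u = T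
unit speed and extended Darboux frame equations, then Ω_v = κ_n² τ_g¹ D. -/
theorem betchov_da_rios_soliton_velocity
    (Ω T E D N : ℝ → ℝ → (Fin 4 → ℝ)) (κn κg τg : ℝ → ℝ → ℝ)
    (hΩ : ∀ u v, deriv (fun a => Ω a v) u = T u v)
    (hT : ∀ u v, deriv (fun a => T a v) u = κn u v • N u v)
    (hE : ∀ u v, deriv (fun a => E a v) u = κg u v • D u v + τg u v • N u v)
    (hDu : ∀ u v, deriv (fun a => D a v) u = -(κg u v) • E u v)
    (hN : ∀ u v, deriv (fun a => N a v) u = -(κn u v) • T u v - τg u v • E u v)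
    (hD : ∀ u v, D u v = cross (N u v) (T u v) (E u v))
    (hTd : ∀ u v, DifferentiableAt ℝ (fun a => T a v) u)
    (hNd : ∀ u v, DifferentiableAt ℝ (fun a => N a v) u)
    (hκd : ∀ u v, DifferentiableAt ℝ (fun a => κn a v) u)
    (hBDR : ∀ u v, deriv (fun b => Ω u b) v =
      cross (deriv (fun a => Ω a v) u)
        (deriv (fun a => deriv (fun b => Ω b v) a) u)
        (deriv (fun a => deriv (fun b => deriv (fun c => Ω c v) b) a) u)) :
    ∀ u v, deriv (fun b => Ω u b) v = ((κn u v) ^ 2 * τg u v) • D u v := by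
  intro u v
  have h1 : (fun a => deriv (fun b => Ω b v) a) = fun a => T a v := by
    funext a; exact hΩ a v
  have h2 : (fun a => deriv (fun b => deriv (fun c => Ω c v) b) a)
      = fun a => κn a v • N a v := by
    funext a; rw [h1]; exact hT a v
  have h3 : deriv (fun a => deriv (fun b => deriv (fun c => Ω c v) b) a) u
      = κn u v • deriv (fun a => N a v) u + deriv (fun a => κn a v) u • N u v := by
    rw [h2]; exact deriv_smul (hκd u v) (hNd u v)
  have := hBDR u v
  rw [h3, hN, h1, hT, hΩ] at this
  rw [this, hD]
  set t := T u v
  set e := E u v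
  set n := N u v
  set k := κn u v
  set g := τg u v
  set k' := deriv (fun a => κn a v) u
  funext i
  fin_cases i <;>
    simp [cross, Matrix.cons_val_zero, Matrix.cons_val_one, smul_eq_mul] <;> ring
end

section
/- For a Betchov–Da Rios soliton surface in E⁴ with extended Darboux frame (κ_n τ_g¹ ≠ 0), the curvature-ellipse invariant satisfies Δ(p) = −[4a₃₄ κ_n τ_g¹ (κ_g²)² + a₂₃²]/(4(κ_n τ_g¹)²). In particular, Δ(p) < 0 (p is hyperbolic) iff 4a₃₄κ_nτ_g¹(κ_g²)² + a₂₃² > 0, and Δ(p) > 0 (p elliptic) iff that quantity is negative. -/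
/-- The curvature-ellipse invariant Δ(p) of a Betchov–Da Rios soliton surface equals
−[4a₃₄ κ_n τ_g¹ (κ_g²)² + a₂₃²]/(4(κ_n τ_g¹)²); consequently p is hyperbolic
(Δ(p) < 0) iff 4a₃₄κ_nτ_g¹(κ_g²)² + a₂₃² > 0, and elliptic (Δ(p) > 0) iff that
quantity is negative. -/
theorem curvature_ellipse_invariant (κn κg τg a23 a34 Δ : ℝ → ℝ → ℝ)
    (hκ : ∀ u v, κn u v ≠ 0) (hτ : ∀ u v, τg u v ≠ 0)
    (hΔ : ∀ u v, Δ u v = (1 / 4) * Matrix.det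
      !![0, 2 * (-(κg u v)), a23 u v / ((κn u v) ^ 2 * τg u v), 0;
         κn u v, 0, a34 u v / ((κn u v) ^ 2 * τg u v), 0;
         0, 0, 2 * (-(κg u v)), a23 u v / ((κn u v) ^ 2 * τg u v);
         0, κn u v, 0, a34 u v / ((κn u v) ^ 2 * τg u v)]) :
    ∀ u v,
      Δ u v = -((4 * a34 u v * κn u v * τg u v * (κg u v) ^ 2 + (a23 u v) ^ 2)
        / (4 * (κn u v * τg u v) ^ 2)) ∧
      (Δ u v < 0 ↔ 0 < 4 * a34 u v * κn u v * τg u v * (κg u v) ^ 2 + (a23 u v) ^ 2) ∧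
      (0 < Δ u v ↔ 4 * a34 u v * κn u v * τg u v * (κg u v) ^ 2 + (a23 u v) ^ 2 < 0) := by
  intro u v
  have hκ' := hκ u v
  have hτ' := hτ u v
  have hd : (κn u v * τg u v) ^ 2 > 0 := by positivity
  have heq : Δ u v = -((4 * a34 u v * κn u v * τg u v * (κg u v) ^ 2 + (a23 u v) ^ 2)
      / (4 * (κn u v * τg u v) ^ 2)) := by
    rw [hΔ u v]
    simp [Matrix.det_succ_row_zero, Fin.sum_univ_succ, Fin.succAbove]
    field_simp
    ring
  refine ⟨heq, ?_, ?_⟩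
  · rw [heq]
    constructor
    · intro h
      by_contra hc
      push_neg at hc
      have : -((4 * a34 u v * κn u v * τg u v * (κg u v) ^ 2 + (a23 u v) ^ 2)
          / (4 * (κn u v * τg u v) ^ 2)) ≥ 0 := by
        apply neg_nonneg.mpr
        apply div_nonpos_of_nonpos_of_nonneg hc (by positivity)
      linarith
    · intro h
      exact neg_lt_zero.mpr (div_pos h (by positivity))
  · rw [heq]
    constructor
    · intro h
      by_contra hc
      push_neg at hc
      have : -((4 * a34 u v * κn u v * τg u v * (κg u v) ^ 2 + (a23 u v) ^ 2)
          / (4 * (κn u v * τg u v) ^ 2)) ≤ 0 := by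
        apply neg_nonpos.mpr
        exact div_nonneg hc (by positivity)
      linarith
    · intro h
      have : (4 * a34 u v * κn u v * τg u v * (κg u v) ^ 2 + (a23 u v) ^ 2)
          / (4 * (κn u v * τg u v) ^ 2) < 0 := div_neg_of_neg_of_pos h (by positivity)
      linarith
end

section
/- A Betchov–Da Rios soliton surface in E⁴ with extended Darboux frame (κ_n τ_g¹ ≠ 0) satisfies the Wintgen equality K + |K_N| = ‖H⃗‖² if and only if a₂₃ = 0 and a₃₄ = κ_n² τ_g¹ (κ_n − 2κ_g²), given K = (a₃₄ − κ_nτ_g¹(κ_g²)²)/(κ_nτ_g¹), K_N = (κ_n³τ_g¹κ_g² − a₃₄κ_g²)/(κ_n²τ_g¹), and H⃗ = [(−a₂₃κ_n²τ_g¹)E + κ_nτ_g¹(a₃₄κ_n + κ_n⁴τ_g¹)N]/(2(κ_n²τ_g¹)²), under the sign convention that makes K + K_N − ‖H⃗‖² = −[a₂₃² + (a₃₄ + κ_n²τ_g¹(2κ_g² − κ_n))²]/(4(κ_n²τ_g¹)²). -/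
/-- A Betchov–Da Rios soliton surface is Wintgen ideal (superconformal), i.e. satisfies
the Wintgen equality K + K_N = ‖H⃗‖² (with the sign convention on K_N making
K + K_N − ‖H⃗‖² = −[a₂₃² + (a₃₄ + κ_n²τ_g¹(2κ_g² − κ_n))²]/(4(κ_n²τ_g¹)²)), iff
a₂₃ = 0 and a₃₄ = κ_n² τ_g¹ (κ_n − 2κ_g²). Here ‖H⃗‖² = hE² + hN² for the components
of H⃗ in the orthonormal normal frame {E, N}. -/
theorem wintgen_ideal_iff (κn κg τg a23 a34 K KN hE hN : ℝ → ℝ → ℝ)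
    (hκ : ∀ u v, κn u v ≠ 0) (hτ : ∀ u v, τg u v ≠ 0)
    (hKdef : ∀ u v, K u v
      = (a34 u v - κn u v * τg u v * (κg u v) ^ 2) / (κn u v * τg u v))
    (hKNdef : ∀ u v, KN u v
      = ((κn u v) ^ 3 * τg u v * κg u v - a34 u v * κg u v) / ((κn u v) ^ 2 * τg u v))
    (hhE : ∀ u v, hE u v
      = -(a23 u v * (κn u v) ^ 2 * τg u v) / (2 * ((κn u v) ^ 2 * τg u v) ^ 2))
    (hhN : ∀ u v, hN u v
      = κn u v * τg u v * (a34 u v * κn u v + (κn u v) ^ 4 * τg u v)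
        / (2 * ((κn u v) ^ 2 * τg u v) ^ 2)) :
    ∀ u v, K u v + KN u v = (hE u v) ^ 2 + (hN u v) ^ 2 ↔
      a23 u v = 0 ∧ a34 u v = (κn u v) ^ 2 * τg u v * (κn u v - 2 * κg u v) := by
  intro u v
  set k := κn u v with hk
  set t := τg u v with ht
  set g := κg u v with hg
  set A := a23 u v with hA
  set B := a34 u v with hB
  have hk0 : k ≠ 0 := hκ u v
  have ht0 : t ≠ 0 := hτ u v
  have hd : (k ^ 2 * t) ≠ 0 := by positivity
  have key : K u v + KN u v - ((hE u v) ^ 2 + (hN u v) ^ 2)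
      = -(A ^ 2 + (B + k ^ 2 * t * (2 * g - k)) ^ 2) / (4 * (k ^ 2 * t) ^ 2) := by
    rw [hKdef, hKNdef, hhE, hhN]
    rw [← hk, ← ht, ← hg, ← hA, ← hB]
    field_simp
    ring
  constructor
  · intro h
    have h0 : A ^ 2 + (B + k ^ 2 * t * (2 * g - k)) ^ 2 = 0 := by
      have : -(A ^ 2 + (B + k ^ 2 * t * (2 * g - k)) ^ 2) / (4 * (k ^ 2 * t) ^ 2) = 0 := by
        rw [← key]; linarith
      have h4 : (4 : ℝ) * (k ^ 2 * t) ^ 2 ≠ 0 := by positivity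
      have := (div_eq_zero_iff.mp this).resolve_right h4
      linarith
    have hA0 : A = 0 := by nlinarith [sq_nonneg A, sq_nonneg (B + k ^ 2 * t * (2 * g - k))]
    have hB0 : B + k ^ 2 * t * (2 * g - k) = 0 := by
      nlinarith [sq_nonneg A, sq_nonneg (B + k ^ 2 * t * (2 * g - k))]
    exact ⟨hA0, by linarith [hB0]; ⟩
  · rintro ⟨h1, h2⟩
    have : A ^ 2 + (B + k ^ 2 * t * (2 * g - k)) ^ 2 = 0 := by
      rw [h1, h2]; ring
    have := key
    rw [‹A ^ 2 + (B + k ^ 2 * t * (2 * g - k)) ^ 2 = 0›] at this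
    simp at this
    linarith
end
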